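/- Let M_a(t) denote the number of 3×3 magic squares with all entries positive integers and magic sum t. Then for every integer t ≥ 1: M_a(t) = 0 if t is not divisible by 3; 9·M_a(t) = 2(t²−16t+72) if t ≡ 0 (mod 18); 9·M_a(t) = 2(t−3)(t−13) if t ≡ 3 (mod 18); 9·M_a(t) = 2(t−6)(t−10) if t ≡ 6 (mod 18); 9·M_a(t) = 2(t−7)(t−9) if t ≡ 9 (mod 18); 9·M_a(t) = 2(t−4)(t−12) if t ≡ 12 (mod 18); and 9·M_a(t) = 2(t²−16t+51) if t ≡ 15 (mod 18). -/

import Mathlib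

/-
By the row, column and diagonal equations a magic square with magic sum `s` has centre
`c = s / 3` (so `3 ∣ s`) and is Lucas's square with entries `c`, `c ± a`, `c ± b`, `c ± (a + b)`,
`c ± (a - b)`. Its entries are positive iff `|a| + |b| < c`, and distinct iff `a, b ≠ 0` and
`|a|, |b|` are not in ratio `1` or `2`. Each admissible `(|a|, |b|)` comes from four sign choices,
so with `n = c - 1` the count is four times the number of positive pairs `p + q ≤ n` off the lines
`p = q`, `p = 2q`, `q = 2p`, which is `n.choose 2 - ⌊n/2⌋ - 2⌊n/3⌋`. The six formulas are this
quasi-polynomial evaluated on the residues of `n` mod 6.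
-/

/-- A 3×3 magic square with magic sum `s`: all nine entries distinct, all row
sums, column sums, the main diagonal sum and the antidiagonal sum equal `s`. -/
def IsMagicSqSum (x : Matrix (Fin 3) (Fin 3) ℤ) (s : ℤ) : Prop :=
  (Function.Injective fun p : Fin 3 × Fin 3 => x p.1 p.2) ∧
  (∀ i, ∑ j, x i j = s) ∧ (∀ j, ∑ i, x i j = s) ∧
  x 0 0 + x 1 1 + x 2 2 = s ∧ x 0 2 + x 1 1 + x 2 0 = s

/-- `Ma t` = number of 3×3 magic squares with positive entries and magic sum t. -/
noncomputable def Ma (t : ℕ) : ℕ :=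
  {x : Matrix (Fin 3) (Fin 3) ℤ |
    IsMagicSqSum x (t : ℤ) ∧ ∀ i j, 0 < x i j}.ncard

open Finset

def sumLePairs (n : ℕ) : Finset (ℕ × ℕ) := {x ∈ Icc 1 n ×ˢ Icc 1 n | x.1 + x.2 ≤ n}

lemma card_sumLePairs (n : ℕ) : #(sumLePairs n) = n.choose 2 := by
  calc #(sumLePairs n) = #{x ∈ Icc 1 n ×ˢ Icc 1 n | x.1 < x.2} := by
        apply card_nbij' (fun x => (x.1, x.1 + x.2)) (fun x => (x.1, x.2 - x.1)) <;>
          rintro ⟨p, q⟩ <;>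
          simp only [sumLePairs, coe_filter, mem_product, mem_Icc, Set.mem_ofPred_eq, Prod.mk.injEq,
            true_and] <;> omega
    _ = n.choose 2 := by simp [card_product_filter_lt]

lemma card_sumLePairs_filter_fst_eq_mul (n a : ℕ) (ha : 0 < a) :
    #{x ∈ sumLePairs n | x.1 = a * x.2} = n / (a + 1) := by
  calc #{x ∈ sumLePairs n | x.1 = a * x.2} = #(Icc 1 (n / (a + 1))) := by
        refine card_nbij' Prod.snd (fun k => (a * k, k)) ?_ ?_ ?_ (fun _ _ => rfl) <;>
          intro x hx <;>
          simp only [coe_filter, sumLePairs, mem_filter, mem_Icc, mem_product, coe_Icc, Set.mem_Icc,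
            Set.mem_ofPred_eq, Nat.le_div_iff_mul_le (Nat.succ_pos a), Nat.mul_succ, and_true] at hx ⊢
        · rw [hx.2, mul_comm] at hx
          omega
        · have : a ≤ a * x := Nat.le_mul_of_pos_right a hx.1
          rw [mul_comm x a] at hx
          omega
        · exact Prod.ext hx.2.symm rfl
    _ = n / (a + 1) := by simp

lemma card_sumLePairs_filter_snd_eq_mul (n a : ℕ) (ha : 0 < a) :
    #{x ∈ sumLePairs n | x.2 = a * x.1} = n / (a + 1) := by
  rw [← card_sumLePairs_filter_fst_eq_mul n a ha]
  apply card_nbij' Prod.swap Prod.swap <;> rintro ⟨p, q⟩ <;>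
    simp only [sumLePairs, coe_filter, mem_filter, mem_product, mem_Icc, Set.mem_ofPred_eq,
      Prod.swap_prod_mk, implies_true] <;> omega

def lucasPairs (n : ℕ) : Finset (ℕ × ℕ) :=
  {x ∈ sumLePairs n | x.1 ≠ x.2 ∧ x.1 ≠ 2 * x.2 ∧ x.2 ≠ 2 * x.1}

lemma card_lucasPairs_add (n : ℕ) : #(lucasPairs n) + n / 2 + 2 * (n / 3) = n.choose 2 := by
  have hsplit : #(sumLePairs n) = #(lucasPairs n) + #{x ∈ sumLePairs n | x.1 = 1 * x.2} +
      #{x ∈ sumLePairs n | x.1 = 2 * x.2} + #{x ∈ sumLePairs n | x.2 = 2 * x.1} := by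
    simp only [lucasPairs, card_filter, card_eq_sum_ones (sumLePairs n), ← sum_add_distrib]
    refine sum_congr rfl fun x hx => ?_
    simp only [sumLePairs, mem_filter, mem_product, mem_Icc] at hx
    split_ifs <;> omega
  rw [card_sumLePairs, card_sumLePairs_filter_fst_eq_mul n 1 one_pos,
    card_sumLePairs_filter_fst_eq_mul n 2 two_pos,
    card_sumLePairs_filter_snd_eq_mul n 2 two_pos] at hsplit
  omega

lemma ncard_natAbs_preimage (s : Finset (ℕ × ℕ)) (hs : ∀ x ∈ s, x.1 ≠ 0 ∧ x.2 ≠ 0) :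
    {v : ℤ × ℤ | (v.1.natAbs, v.2.natAbs) ∈ s}.ncard = 4 * #s := by
  have hunion : {v : ℤ × ℤ | (v.1.natAbs, v.2.natAbs) ∈ s} =
      ↑(s.biUnion fun x =>
        ({(x.1 : ℤ), -(x.1 : ℤ)} ×ˢ {(x.2 : ℤ), -(x.2 : ℤ)} : Finset (ℤ × ℤ))) := by
    ext ⟨a, b⟩
    simp only [Set.mem_ofPred_eq, coe_biUnion, mem_coe, Set.mem_iUnion, mem_product, mem_insert,
      mem_singleton, exists_prop, Prod.exists]
    constructor
    · exact fun h => ⟨_, _, h, Int.natAbs_eq a, Int.natAbs_eq b⟩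
    · rintro ⟨p, q, h, ha | ha, hb | hb⟩ <;> subst ha hb <;> simpa using h
  rw [hunion, Set.ncard_coe_finset, card_biUnion, sum_const_nat, mul_comm]
  · intro x hx
    have := hs x hx
    rw [card_product, card_pair, card_pair] <;> omega
  · intro x _ y _ hxy
    simp only [Function.onFun, disjoint_left, mem_product, mem_insert, mem_singleton]
    rw [Ne, Prod.ext_iff] at hxy
    omega

def lucasSquare (c a b : ℤ) : Matrix (Fin 3) (Fin 3) ℤ :=
  !![c + a, c - a - b, c + b; c - a + b, c, c + a - b; c - b, c + a + b, c - a]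

lemma lucasSquare_injective (c : ℤ) : Function.Injective fun v : ℤ × ℤ => lucasSquare c v.1 v.2 :=
  fun v w h => Prod.ext (by simpa [lucasSquare] using congrFun (congrFun h 0) 0)
    (by simpa [lucasSquare] using congrFun (congrFun h 0) 2)

lemma IsMagicSqSum.eq_lucasSquare {x : Matrix (Fin 3) (Fin 3) ℤ} {s : ℤ} (h : IsMagicSqSum x s) :
    s = 3 * x 1 1 ∧ x = lucasSquare (x 1 1) (x 0 0 - x 1 1) (x 0 2 - x 1 1) := by
  obtain ⟨-, hrow, hcol, hdiag, hanti⟩ := h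
  have := hrow 0; have := hrow 1; have := hrow 2; have := hcol 0; have := hcol 1; have := hcol 2
  simp only [Fin.sum_univ_three] at *
  -- The middle row, the middle column and the two diagonals cover the centre four times and
  -- every other cell once, so `4 s = 3 s + 3 x₁₁`.
  have hs : s = 3 * x 1 1 := by omega
  refine ⟨hs, ?_⟩
  ext i j
  fin_cases i <;> fin_cases j <;>
    simp only [Fin.zero_eta, Fin.mk_one, Fin.reduceFinMk, lucasSquare, Matrix.of_apply,
      Matrix.cons_val', Matrix.cons_val, Matrix.cons_val_fin_one] <;> omega

lemma isMagicSqSum_lucasSquare_iff (c a b : ℤ) :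
    IsMagicSqSum (lucasSquare c a b) (3 * c) ↔
      Function.Injective fun p : Fin 3 × Fin 3 => lucasSquare c a b p.1 p.2 := by
  refine ⟨fun h => h.1, fun h => ⟨h, ?_, ?_, ?_, ?_⟩⟩
  all_goals try intro i; fin_cases i
  all_goals
    simp only [Fin.zero_eta, Fin.mk_one, Fin.reduceFinMk, lucasSquare, Matrix.of_apply,
      Matrix.cons_val', Matrix.cons_val, Matrix.cons_val_fin_one, Fin.sum_univ_three]
    ring

lemma injective_lucasSquare_iff (c a b : ℤ) :
    (Function.Injective fun p : Fin 3 × Fin 3 => lucasSquare c a b p.1 p.2) ↔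
      a ≠ 0 ∧ b ≠ 0 ∧ a.natAbs ≠ b.natAbs ∧ a.natAbs ≠ 2 * b.natAbs ∧ b.natAbs ≠ 2 * a.natAbs := by
  simp only [Function.Injective, Prod.forall, Fin.forall_fin_succ, Prod.mk.injEq, lucasSquare,
    Matrix.of_apply, Matrix.cons_val', Matrix.cons_val_fin_one, Matrix.cons_val_zero,
    Matrix.cons_val_succ, Fin.succ_zero_eq_one, Fin.succ_one_eq_two, Fin.reduceEq, Fin.succ_ne_zero,
    zero_ne_one, IsEmpty.forall_iff, forall_const, and_true, true_and, and_false, imp_false]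
  omega

lemma pos_lucasSquare_iff (c a b : ℤ) :
    (∀ i j, 0 < lucasSquare c a b i j) ↔ a.natAbs + b.natAbs < c := by
  simp only [Fin.forall_fin_succ, forall_const, lucasSquare, Matrix.of_apply,
    Matrix.cons_val', Matrix.cons_val_fin_one, Matrix.cons_val_zero, Matrix.cons_val_succ]
  omega

lemma isMagicSqSum_lucasSquare_and_pos_iff (n : ℕ) (a b : ℤ) :
    (IsMagicSqSum (lucasSquare (n + 1) a b) (3 * (n + 1)) ∧
        ∀ i j, 0 < lucasSquare (n + 1) a b i j) ↔
      (a.natAbs, b.natAbs) ∈ lucasPairs n := by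
  rw [isMagicSqSum_lucasSquare_iff, injective_lucasSquare_iff, pos_lucasSquare_iff]
  simp only [lucasPairs, sumLePairs, mem_filter, mem_product, mem_Icc]
  omega

lemma setOf_isMagicSqSum_pos_eq_image (n : ℕ) :
    {x : Matrix (Fin 3) (Fin 3) ℤ | IsMagicSqSum x ((3 * (n + 1) : ℕ) : ℤ) ∧ ∀ i j, 0 < x i j} =
      (fun v : ℤ × ℤ => lucasSquare (n + 1) v.1 v.2) ''
        {v | (v.1.natAbs, v.2.natAbs) ∈ lucasPairs n} := by
  ext x
  simp only [Set.mem_ofPred_eq, Set.mem_image, Prod.exists]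
  constructor
  · rintro ⟨hx, hpos⟩
    obtain ⟨hs, hlucas⟩ := hx.eq_lucasSquare
    have hc : x 1 1 = n + 1 := by push_cast at hs; omega
    rw [hc] at hlucas
    rw [hlucas] at hx hpos
    push_cast at hx
    exact ⟨_, _, (isMagicSqSum_lucasSquare_and_pos_iff n _ _).1 ⟨hx, hpos⟩, hlucas.symm⟩
  · rintro ⟨a, b, hab, rfl⟩
    push_cast
    exact (isMagicSqSum_lucasSquare_and_pos_iff n a b).2 hab

lemma Ma_three_mul_succ (n : ℕ) : Ma (3 * (n + 1)) = 4 * #(lucasPairs n) := by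
  rw [Ma, setOf_isMagicSqSum_pos_eq_image, Set.ncard_image_of_injective _ (lucasSquare_injective _),
    ncard_natAbs_preimage]
  intro x hx
  simp only [lucasPairs, sumLePairs, mem_filter, mem_product, mem_Icc] at hx
  omega

lemma Ma_eq_zero_of_not_three_dvd {t : ℕ} (ht : ¬ 3 ∣ t) : Ma t = 0 := by
  have hempty : {x : Matrix (Fin 3) (Fin 3) ℤ | IsMagicSqSum x t ∧ ∀ i j, 0 < x i j} = ∅ :=
    Set.eq_empty_of_forall_notMem fun x hx => ht (by have := hx.1.eq_lucasSquare.1; omega)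
  rw [Ma, hempty, Set.ncard_empty]

lemma nine_mul_Ma_three_mul_succ (n : ℕ) :
    9 * (Ma (3 * (n + 1)) : ℤ) = 18 * n * (n - 1) - 36 * (n / 2 : ℕ) - 72 * (n / 3 : ℕ) := by
  have hchoose : ((n.choose 2 : ℕ) : ℤ) * 2 = n * (n - 1) := by
    have : (n.choose 2 : ℚ) * 2 = n * (n - 1) := by rw [Nat.cast_choose_two]; ring
    exact_mod_cast this
  have hcount : ((#(lucasPairs n) + n / 2 + 2 * (n / 3) : ℕ) : ℤ) = n.choose 2 :=
    congrArg Nat.cast (card_lucasPairs_add n)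
  rw [Ma_three_mul_succ]
  push_cast at hcount ⊢
  linear_combination 36 * hcount + 18 * hchoose

theorem magic_affine_count (t : ℕ) (ht : 1 ≤ t) :
    (¬ (3 ∣ t) → Ma t = 0) ∧
    (t % 18 = 0 → 9 * (Ma t : ℤ) = 2 * ((t : ℤ)^2 - 16*(t : ℤ) + 72)) ∧
    (t % 18 = 3 → 9 * (Ma t : ℤ) = 2 * ((t : ℤ) - 3) * ((t : ℤ) - 13)) ∧
    (t % 18 = 6 → 9 * (Ma t : ℤ) = 2 * ((t : ℤ) - 6) * ((t : ℤ) - 10)) ∧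
    (t % 18 = 9 → 9 * (Ma t : ℤ) = 2 * ((t : ℤ) - 7) * ((t : ℤ) - 9)) ∧
    (t % 18 = 12 → 9 * (Ma t : ℤ) = 2 * ((t : ℤ) - 4) * ((t : ℤ) - 12)) ∧
    (t % 18 = 15 → 9 * (Ma t : ℤ) = 2 * ((t : ℤ)^2 - 16*(t : ℤ) + 51)) := by
  refine ⟨Ma_eq_zero_of_not_three_dvd, ?_⟩
  by_cases h3 : ¬ 3 ∣ t
  · refine ⟨?_, ?_, ?_, ?_, ?_, ?_⟩ <;> intro h <;> omega
  obtain ⟨k, r, hr, rfl⟩ : ∃ k r, r < 6 ∧ t = 3 * (6 * k + r + 1) :=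
    ⟨(t / 3 - 1) / 6, (t / 3 - 1) % 6, by omega, by omega⟩
  have key := nine_mul_Ma_three_mul_succ (6 * k + r)
  rw [show (6 * k + r) / 2 = 3 * k + r / 2 by omega,
    show (6 * k + r) / 3 = 2 * k + r / 3 by omega] at key
  -- For each residue `r` exactly one of the six hypotheses holds; `omega` refutes the others.
  interval_cases r <;> refine ⟨?_, ?_, ?_, ?_, ?_, ?_⟩ <;> intro h <;>
    first | omega | (norm_num at key ⊢; linear_combination key)
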